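/- arXiv:1707.07519 — 5 statements merged into one kernel-verified Lean document; each statement's English description precedes it below -/
import Mathlib

section
/- For every integer k ≥ 2 and every integer n with k+2 ≤ n ≤ 2k+2, the formula F_n^{(k)} = 2^{n-2} - (n-k)·2^{n-k-3} holds. -/
/-- The `k`-generalized Fibonacci sequence: `F 0 = 0`, `F 1 = 1`, and each later
term is the sum of the `k` preceding terms (terms with negative index being 0). -/
def genFib (k : ℕ) : ℕ → ℕ
  | 0 => 0
  | 1 => 1
  | n + 2 => ∑ i ∈ Finset.range k, genFib k (n + 1 - i)
termination_by n => n
decreasing_by omega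

lemma genFib_rec (k m : ℕ) (hk : 1 ≤ k) (hm : 2 ≤ m) :
    genFib k (m + 1) + genFib k (m - k) = 2 * genFib k m := by
  obtain ⟨K, rfl⟩ : ∃ K, k = K + 1 := ⟨k - 1, by omega⟩
  obtain ⟨p, rfl⟩ : ∃ p, m = p + 2 := ⟨m - 2, by omega⟩
  have h1 : genFib (K+1) (p + 3) = ∑ i ∈ Finset.range (K+1), genFib (K+1) (p + 2 - i) := by
    rw [show p + 3 = (p+1) + 2 from rfl, genFib]
  have h2 : genFib (K+1) (p + 2) = ∑ i ∈ Finset.range (K+1), genFib (K+1) (p + 1 - i) := by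
    rw [genFib]
  rw [Finset.sum_range_succ'] at h1
  rw [Finset.sum_range_succ] at h2
  have h3 : ∀ i ∈ Finset.range K, genFib (K+1) (p + 2 - (i + 1)) = genFib (K+1) (p + 1 - i) := by
    intro i _
    congr 1
    omega
  rw [Finset.sum_congr rfl h3] at h1
  have h4 : p + 2 - 0 = p + 2 := rfl
  rw [h4] at h1
  have h6 : p + 2 - (K + 1) = p + 1 - K := by omega
  rw [h6]
  show genFib (K+1) (p + 3) + genFib (K+1) (p + 1 - K) = 2 * genFib (K+1) (p + 2)
  rw [h1, h2]
  ring

lemma genFib_pow (k m : ℕ) (hk : 2 ≤ k) (h2 : 2 ≤ m) (hm : m ≤ k + 1) :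
    genFib k m = 2 ^ (m - 2) := by
  revert hm
  induction m, h2 using Nat.le_induction with
  | base =>
    intro _
    have h1 : genFib k 2 = ∑ i ∈ Finset.range k, genFib k (1 - i) := by
      rw [show (2:ℕ) = 0 + 2 from rfl, genFib]
    obtain ⟨K, rfl⟩ : ∃ K, k = K + 1 := ⟨k - 1, by omega⟩
    rw [Finset.sum_range_succ'] at h1
    have h3 : ∀ i ∈ Finset.range K, genFib (K+1) (1 - (i + 1)) = 0 := by
      intro i _
      have : 1 - (i+1) = 0 := by omega
      rw [this]
      simp [genFib]
    rw [Finset.sum_congr rfl h3] at h1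
    simp [genFib] at h1
    simpa [genFib] using h1
  | succ m hm2 ih =>
    intro hm
    have hrec := genFib_rec k m (by omega) hm2
    have hmk : m - k = 0 := by omega
    rw [hmk] at hrec
    have h0 : genFib k 0 = 0 := by simp [genFib]
    have ihm := ih (by omega)
    rw [h0, ihm] at hrec
    have : m + 1 - 2 = (m - 2) + 1 := by omega
    rw [this, pow_succ]
    omega

lemma genFib_key (k j : ℕ) (hk : 2 ≤ k) (hj : j ≤ k) :
    2 * (genFib k (k + 2 + j) : ℚ) + ((j : ℚ) + 2) * 2 ^ j = 2 ^ (k + j + 1) := by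
  induction j with
  | zero =>
    have hrec := genFib_rec k (k + 1) (by omega) (by omega)
    have h1 : k + 1 - k = 1 := by omega
    rw [h1] at hrec
    have hpow : genFib k (k + 1) = 2 ^ (k - 1) := by
      have := genFib_pow k (k + 1) hk (by omega) (by omega)
      rw [this]
      congr 1
    have h2 : genFib k 1 = 1 := by simp [genFib]
    rw [hpow, h2] at hrec
    obtain ⟨K, rfl⟩ : ∃ K, k = K + 2 := ⟨k - 2, by omega⟩
    have hcast : (genFib (K+2) (K + 2 + 1 + 1) : ℚ) + 1 = 2 * 2 ^ (K + 1) := by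
      exact_mod_cast congrArg (Nat.cast : ℕ → ℚ) hrec
    have hidx : K + 2 + 2 + 0 = K + 2 + 1 + 1 := by omega
    rw [hidx]
    push_cast
    linear_combination (2:ℚ) * hcast
  | succ j ih =>
    have hj' : j ≤ k := by omega
    have ihq := ih hj'
    have hrec := genFib_rec k (k + 2 + j) (by omega) (by omega)
    have h1 : k + 2 + j - k = j + 2 := by omega
    rw [h1] at hrec
    have hpow : genFib k (j + 2) = 2 ^ j := by
      have := genFib_pow k (j + 2) hk (by omega) (by omega)
      rw [this]
      congr 1
    rw [hpow] at hrec
    have hcast : (genFib k (k + 2 + j + 1) : ℚ) + 2 ^ j = 2 * genFib k (k + 2 + j) := by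
      exact_mod_cast congrArg (Nat.cast : ℕ → ℚ) hrec
    have hidx : k + 2 + (j + 1) = k + 2 + j + 1 := by omega
    rw [hidx]
    push_cast
    linear_combination (2:ℚ) * hcast + 2 * ihq

theorem genFib_cooper_howard (k n : ℕ) (hk : 2 ≤ k) (h1 : k + 2 ≤ n) (h2 : n ≤ 2 * k + 2) :
    (genFib k n : ℚ) = 2 ^ ((n : ℤ) - 2) - ((n : ℚ) - (k : ℚ)) * 2 ^ ((n : ℤ) - (k : ℤ) - 3) := by
  obtain ⟨j, rfl⟩ : ∃ j, n = k + 2 + j := ⟨n - k - 2, by omega⟩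
  have hj : j ≤ k := by omega
  have key := genFib_key k j hk hj
  have e1 : ((k + 2 + j : ℕ) : ℤ) - 2 = ((k + j : ℕ) : ℤ) := by push_cast; ring
  have e2 : ((k + 2 + j : ℕ) : ℤ) - (k : ℤ) - 3 = (j : ℤ) - 1 := by push_cast; ring
  rw [e1, e2, zpow_natCast]
  rw [zpow_sub₀ (two_ne_zero), zpow_natCast, zpow_one]
  have e3 : ((k + 2 + j : ℕ) : ℚ) - (k : ℚ) = (j : ℚ) + 2 := by push_cast; ring
  rw [e3]
  have e4 : ((2:ℚ) ^ (k + j + 1)) = 2 * 2 ^ (k + j) := by rw [pow_succ]; ring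
  rw [e4] at key
  linear_combination key / 2
end

section
/- Let k ≥ 4 and let t ≥ 2 be an integer with 2^t ≤ k + 3. Then with n = k + 2^t - 1, m = k + 2^t - 4, n_1 = k + 2^t - 2, m_1 = t + 2^t - 5, the equation F_n^{(k)} - 2^m = F_{n_1}^{(k)} - 2^{m_1} holds. -/
lemma genFib_rec_s8 (K n : ℕ) :
    genFib (K + 1) (n + 3) + genFib (K + 1) (n + 1 - K) = 2 * genFib (K + 1) (n + 2) := by
  have h1 : genFib (K + 1) (n + 3) =
      genFib (K + 1) (n + 2) + ∑ i ∈ Finset.range K, genFib (K + 1) (n + 1 - i) := by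
    show (genFib (K + 1) (n + 1 + 2)) = _
    rw [genFib]
    rw [Finset.sum_range_succ']
    have : ∀ i ∈ Finset.range K, genFib (K+1) (n + 1 + 1 - (i+1)) = genFib (K+1) (n + 1 - i) := by
      intro i _
      congr 1
      omega
    rw [Finset.sum_congr rfl this]
    rw [Nat.sub_zero]
    ring
  have h2 : genFib (K + 1) (n + 2) =
      (∑ i ∈ Finset.range K, genFib (K + 1) (n + 1 - i)) + genFib (K + 1) (n + 1 - K) := by
    rw [genFib, Finset.sum_range_succ]
  omega

lemma genFib_pow_s8 (K : ℕ) : ∀ m : ℕ, m ≤ K → genFib (K + 1) (m + 2) = 2 ^ m := by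
  intro m
  induction m with
  | zero =>
    intro _
    rw [genFib]
    rw [Finset.sum_range_succ']
    have : ∀ i ∈ Finset.range K, genFib (K+1) (0 + 1 - (i+1)) = 0 := by
      intro i _
      have : 0 + 1 - (i+1) = 0 := by omega
      rw [this, genFib]
    rw [Finset.sum_congr rfl this]
    simp [genFib]
  | succ m ih =>
    intro hm
    have h := genFib_rec_s8 K m
    have h0 : m + 1 - K = 0 := by omega
    rw [h0] at h
    have : genFib (K + 1) 0 = 0 := by rw [genFib]
    rw [this] at h
    rw [ih (by omega)] at h
    have : m + 3 = m + 1 + 2 := by omega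
    rw [this] at h
    omega

lemma genFib_closed (K : ℕ) (_hK : 3 ≤ K) : ∀ j : ℕ, 1 ≤ j → j ≤ K + 2 →
    4 * (genFib (K + 1) (K + 2 + j) : ℤ) = 2 ^ (K + j + 2) - (j + 1) * 2 ^ j := by
  intro j
  induction j with
  | zero => omega
  | succ j ih =>
    intro _ hj
    rcases Nat.eq_zero_or_pos j with rfl | hj1
    · -- base case j = 1 : genFib (K+1) (K+3)
      have h := genFib_rec_s8 K K
      have h0 : K + 1 - K = 1 := by omega
      rw [h0] at h
      have h1 : genFib (K + 1) 1 = 1 := by rw [genFib]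
      rw [h1] at h
      have h2 : genFib (K + 1) (K + 2) = 2 ^ K := by
        have := genFib_pow_s8 K K le_rfl
        simpa using this
      rw [h2] at h
      have hKZ : (genFib (K + 1) (K + 3) : ℤ) = 2 * 2 ^ K - 1 := by
        have hc : (genFib (K + 1) (K + 3) : ℤ) + 1 = 2 * 2 ^ K := by exact_mod_cast h
        linarith
      show 4 * (genFib (K + 1) (K + 2 + 1) : ℤ) = _
      have e : K + 2 + 1 = K + 3 := by omega
      rw [e, hKZ]
      rw [show K + 1 + 2 = K + 3 from rfl]
      rw [pow_succ, pow_succ, pow_succ]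
      ring
    · -- inductive step
      obtain ⟨j', rfl⟩ : ∃ j', j = j' + 1 := ⟨j - 1, by omega⟩
      have hrec := genFib_rec_s8 K (K + (j' + 1))
      have e1 : K + (j' + 1) + 3 = K + 2 + (j' + 1 + 1) := by omega
      have e2 : K + (j' + 1) + 1 - K = j' + 2 := by omega
      have e3 : K + (j' + 1) + 2 = K + 2 + (j' + 1) := by omega
      rw [e1, e2, e3] at hrec
      have hp : genFib (K + 1) (j' + 2) = 2 ^ j' := genFib_pow_s8 K j' (by omega)
      rw [hp] at hrec
      have ihv := ih (by omega) (by omega)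
      have hrecZ : (genFib (K + 1) (K + 2 + (j' + 1 + 1)) : ℤ) + 2 ^ j' =
          2 * genFib (K + 1) (K + 2 + (j' + 1)) := by exact_mod_cast hrec
      have : 4 * (genFib (K + 1) (K + 2 + (j' + 1 + 1)) : ℤ)
          = 2 * (4 * (genFib (K + 1) (K + 2 + (j' + 1)) : ℤ)) - 4 * 2 ^ j' := by
        linarith
      rw [this, ihv]
      push_cast
      ring

theorem pillai_family_iii (k t : ℕ) (hk : 4 ≤ k) (ht : 2 ≤ t) (h : 2 ^ t ≤ k + 3) :
    (genFib k (k + 2 ^ t - 1) : ℤ) - 2 ^ (k + 2 ^ t - 4) =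
      (genFib k (k + 2 ^ t - 2) : ℤ) - 2 ^ (t + 2 ^ t - 5) := by
  obtain ⟨K, rfl⟩ : ∃ K, k = K + 1 := ⟨k - 1, by omega⟩
  have hK : 3 ≤ K := by omega
  obtain ⟨s', hs⟩ : ∃ s', 2 ^ t = s' + 4 := by
    have h4 : 4 ≤ 2 ^ t := by
      calc 4 = 2 ^ 2 := by norm_num
      _ ≤ 2 ^ t := Nat.pow_le_pow_right (by norm_num) ht
    exact ⟨2 ^ t - 4, by omega⟩
  obtain ⟨t'', rfl⟩ : ∃ t'', t = t'' + 2 := ⟨t - 2, by omega⟩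
  have hs' : s' ≤ K := by omega
  rw [hs]
  have e1 : K + 1 + (s' + 4) - 1 = K + 2 + (s' + 2) := by omega
  have e2 : K + 1 + (s' + 4) - 4 = K + s' + 1 := by omega
  have e3 : K + 1 + (s' + 4) - 2 = K + 2 + (s' + 1) := by omega
  have e4 : t'' + 2 + (s' + 4) - 5 = t'' + s' + 1 := by omega
  rw [e1, e2, e3, e4]
  have hA := genFib_closed K hK (s' + 2) (by omega) (by omega)
  have hB := genFib_closed K hK (s' + 1) (by omega) (by omega)
  have eA : K + (s' + 2) + 2 = K + s' + 4 := by omega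
  have eB : K + (s' + 1) + 2 = K + s' + 3 := by omega
  rw [eA] at hA
  rw [eB] at hB
  have hsZ : (2 : ℤ) ^ (t'' + 2) = (s' : ℤ) + 4 := by exact_mod_cast hs
  have hp : (2 : ℤ) ^ (t'' + s' + 1) * 4 = ((s' : ℤ) + 4) * 2 ^ (s' + 1) := by
    rw [← hsZ, ← pow_add]
    rw [show t'' + 2 + (s' + 1) = t'' + s' + 1 + 2 from by omega]
    ring
  have G4 : 4 * ((genFib (K + 1) (K + 2 + (s' + 2)) : ℤ) - 2 ^ (K + s' + 1)) =
      4 * ((genFib (K + 1) (K + 2 + (s' + 1)) : ℤ) - 2 ^ (t'' + s' + 1)) := by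
    push_cast at hA hB ⊢
    linear_combination hA - hB + hp
  linarith
end

section
/- Let k ≥ 5 and suppose integers n, n_1 with k+2 ≤ n_1 < n ≤ 2k+2 and positive integers m_1, α, α_1 and odd positive integers u, u_1 satisfy n - k = 2^α u, n_1 - k = 2^{α_1} u_1 and 2^{α + n - n_1} u - 2^{α_1} u_1 = 2^{k+1}(2^{m_1 - n_1 + 2} - 1) with α + n - n_1 = α_1 and m_1 ≥ n_1 - 1. Then no such configuration exists. -/
lemma pillai_pow_gt (k : ℕ) (hk : 5 ≤ k) : (k + 1) * (k + 2) < 2 ^ (k + 1) := by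
  induction k with
  | zero => omega
  | succ m ih =>
    rcases Nat.lt_or_ge m 5 with h | h
    · have hm4 : m = 4 := by omega
      subst hm4; norm_num
    · have h2 : (m + 1) * (m + 2) < 2 ^ (m + 1) := ih h
      have h3 : 2 ^ (m + 1 + 1) = 2 * 2 ^ (m + 1) := by ring
      nlinarith

theorem pillai_case31_impossible (k n n1 m1 α α1 u u1 : ℕ) (hk : 5 ≤ k)
    (hn1 : k + 2 ≤ n1) (hnn : n1 < n) (hn : n ≤ 2 * k + 2)
    (hm1 : 0 < m1) (hα : 0 < α) (hα1 : 0 < α1)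
    (hu : Odd u) (hu1 : Odd u1)
    (hnu : n - k = 2 ^ α * u) (hn1u : n1 - k = 2 ^ α1 * u1)
    (heq : (2 : ℚ) ^ ((α : ℤ) + (n : ℤ) - (n1 : ℤ)) * u - 2 ^ (α1 : ℤ) * u1 =
      2 ^ ((k : ℤ) + 1) * (2 ^ ((m1 : ℤ) - (n1 : ℤ) + 2) - 1))
    (hαeq : α + n - n1 = α1) (hm1n1 : n1 - 1 ≤ m1) :
    False := by
  have hu1pos : 1 ≤ u1 := hu1.pos
  have hupos : 1 ≤ u := hu.pos
  -- 2^α1 ≤ k + 1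
  have hA : 2 ^ α1 ≤ k + 1 := by
    have h1 : 2 ^ α1 * 1 ≤ 2 ^ α1 * u1 := Nat.mul_le_mul_left _ hu1pos
    omega
  -- u ≤ k + 2
  have hU : u ≤ k + 2 := by
    have h1 : 1 * u ≤ 2 ^ α * u := Nat.mul_le_mul_right _ (Nat.one_le_two_pow)
    omega
  -- exponent equality over ℤ
  have hexp : (α : ℤ) + (n : ℤ) - (n1 : ℤ) = (α1 : ℤ) := by omega
  rw [hexp] at heq
  -- the exponent m1 - n1 + 2 is a positive natural
  set e : ℤ := (m1 : ℤ) - (n1 : ℤ) + 2 with he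
  have he1 : 1 ≤ e := by omega
  obtain ⟨j, hj⟩ : ∃ j : ℕ, e = (j : ℤ) := ⟨e.toNat, by omega⟩
  have hj1 : 1 ≤ j := by omega
  rw [hj] at heq
  rw [zpow_natCast, zpow_natCast, show ((k : ℤ) + 1) = ((k + 1 : ℕ) : ℤ) by push_cast; ring,
    zpow_natCast] at heq
  -- now everything is ℕ-powers cast into ℚ
  have h2j : (2 : ℚ) ≤ 2 ^ j := by
    calc (2 : ℚ) = 2 ^ 1 := by norm_num
    _ ≤ 2 ^ j := by exact pow_le_pow_right₀ (by norm_num) hj1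
  have hRHS : (2 : ℚ) ^ (k + 1) ≤ (2 : ℚ) ^ (k + 1) * (2 ^ j - 1) := by
    nlinarith [pow_pos (by norm_num : (0:ℚ) < 2) (k + 1)]
  have hAq : (2 : ℚ) ^ α1 ≤ (k : ℚ) + 1 := by exact_mod_cast hA
  have hUq : (u : ℚ) ≤ (k : ℚ) + 2 := by exact_mod_cast hU
  have hu1q : (1 : ℚ) ≤ (u1 : ℚ) := by exact_mod_cast hu1pos
  have hbig : ((k : ℚ) + 1) * ((k : ℚ) + 2) < (2 : ℚ) ^ (k + 1) := by
    exact_mod_cast pillai_pow_gt k hk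
  have hApos : (0 : ℚ) < 2 ^ α1 := pow_pos (by norm_num) _
  nlinarith [heq, hRHS, hAq, hUq, hu1q, hbig, hApos]
end

section
/- Let k ≥ 4 and suppose integers n > n_1 ≥ 2, m > m_1 ≥ 0 satisfy F_n^{(k)} - 2^m = F_{n_1}^{(k)} - 2^{m_1}, with 2 ≤ n_1 ≤ k+1 and k+2 ≤ n ≤ 2k+2, and n_1 = n-1. Then n = k+2, m = k-1, n_1 = k+1, and m_1 = 0. -/
lemma geom2 (j : ℕ) : ∑ t ∈ Finset.range j, 2^t = 2^j - 1 := by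
  induction j with
  | zero => simp
  | succ j ih =>
    rw [Finset.sum_range_succ, ih, pow_succ]
    have : 1 ≤ 2^j := Nat.one_le_two_pow
    omega

lemma genFib_eq (k : ℕ) (hk : 2 ≤ k) : ∀ n, 2 ≤ n → n ≤ k + 1 → genFib k n = 2^(n-2) := by
  intro n
  induction n using Nat.strong_induction_on with
  | _ n ih =>
    intro h2 hle
    obtain ⟨j, rfl⟩ : ∃ j, n = j + 2 := ⟨n-2, by omega⟩
    rw [genFib]
    have hjk : j + 1 ≤ k := by omega
    rw [← Finset.sum_subset (Finset.range_subset_range.mpr hjk)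
      (by intro x hx hx2; simp only [Finset.mem_range] at hx hx2
          have : j + 1 - x = 0 := by omega
          rw [this, genFib])]
    have hcong : ∑ i ∈ Finset.range (j+1), genFib k (j + 1 - i)
        = ∑ i ∈ Finset.range (j+1), genFib k (j + 1 - 1 - i + 1) := by
      apply Finset.sum_congr rfl
      intro i hi
      simp only [Finset.mem_range] at hi
      congr 1
      omega
    rw [hcong, Finset.sum_range_reflect (fun t => genFib k (t+1)) (j+1),
      Finset.sum_range_succ']
    have : ∑ i ∈ Finset.range j, genFib k (i + 1 + 1) = ∑ i ∈ Finset.range j, 2^i := by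
      apply Finset.sum_congr rfl
      intro i hi
      simp only [Finset.mem_range] at hi
      rw [ih (i+2) (by omega) (by omega) (by omega)]
      norm_num
    rw [this, geom2]
    have : 1 ≤ 2^j := Nat.one_le_two_pow
    simp [genFib]
    omega

lemma genFib_succ (k : ℕ) (hk : 2 ≤ k) : genFib k (k + 2) = 2^k - 1 := by
  show genFib k (k + 2) = 2^k - 1
  rw [genFib]
  have hcong : ∑ i ∈ Finset.range k, genFib k (k + 1 - i)
      = ∑ i ∈ Finset.range k, genFib k (k - 1 - i + 2) := by
    apply Finset.sum_congr rfl
    intro i hi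
    simp only [Finset.mem_range] at hi
    congr 1
    omega
  rw [hcong, Finset.sum_range_reflect (fun t => genFib k (t+2)) k]
  have : ∑ i ∈ Finset.range k, genFib k (i + 2) = ∑ i ∈ Finset.range k, 2^i := by
    apply Finset.sum_congr rfl
    intro i hi
    simp only [Finset.mem_range] at hi
    rw [genFib_eq k hk (i+2) (by omega) (by omega)]
    norm_num
  rw [this, geom2]

theorem pillai_case2a (k n n1 m m1 : ℕ) (hk : 4 ≤ k) (hn1l : 2 ≤ n1) (hn1u : n1 ≤ k + 1)
    (hnl : k + 2 ≤ n) (hnu : n ≤ 2 * k + 2) (hnn : n1 < n) (hm : m1 < m)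
    (hadj : n1 = n - 1)
    (heq : (genFib k n : ℤ) - 2 ^ m = (genFib k n1 : ℤ) - 2 ^ m1) :
    n = k + 2 ∧ m = k - 1 ∧ n1 = k + 1 ∧ m1 = 0 := by
  have hn : n = k + 2 := by omega
  have hn1 : n1 = k + 1 := by omega
  subst hn hn1
  rw [genFib_succ k (by omega), genFib_eq k (by omega) (k+1) (by omega) (by omega)] at heq
  have h1 : (1:ℕ) ≤ 2^k := Nat.one_le_two_pow
  rw [Nat.cast_sub h1] at heq
  have hexp : (k+1) - 2 = k - 1 := by omega
  rw [hexp] at heq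
  push_cast at heq
  have hkk : k - 1 + 1 = k := by omega
  have hkpow : (2:ℤ)^k = 2 * 2^(k-1) := by
    rw [← pow_succ', hkk]
  have key : (2:ℕ)^m + 1 = 2^(k-1) + 2^m1 := by
    have : ((2^m + 1 : ℕ) : ℤ) = ((2^(k-1) + 2^m1 : ℕ) : ℤ) := by
      push_cast
      linarith [heq, hkpow]
    exact_mod_cast this
  have hm0 : m1 = 0 := by
    by_contra h
    have hmod1 : 2^m % 2 = 0 := by
      have : m = (m-1) + 1 := by omega
      rw [this, pow_succ]; omega
    have hmod2 : 2^(k-1) % 2 = 0 := by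
      have : k - 1 = (k-2) + 1 := by omega
      rw [this, pow_succ]; omega
    have hmod3 : 2^m1 % 2 = 0 := by
      have : m1 = (m1-1) + 1 := by omega
      rw [this, pow_succ]; omega
    omega
  subst hm0
  have : (2:ℕ)^m = 2^(k-1) := by omega
  have hmk : m = k - 1 := Nat.pow_right_injective (le_refl 2) this
  exact ⟨rfl, hmk, rfl, rfl⟩
end

section
/- Let k ≥ 4 and suppose integers n > n_1 ≥ 2, m > m_1 ≥ 0 satisfy F_n^{(k)} - 2^m = F_{n_1}^{(k)} - 2^{m_1} with 2 ≤ n_1 ≤ k+1, k+2 ≤ n ≤ 2k+2 and n_1 < n-1. Then m = n-2 and there exist integers a > b ≥ 0 with (a,b) ≠ (1,0) such that n - k = 2^a - 2^b, n_1 = b - 1 + 2^a - 2^b and m_1 = a - 3 + 2^a - 2^b. -/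
/-!
With `d = n - k`, the closed forms give `4 F_n = 2^n - d 2^(d-1)` and `4 F_{n₁} = 2^{n₁}`, so the
equation becomes `2^n + 2^(m₁+2) = 2^{n₁} + 2^(m+2) + d 2^(d-1)`. For `k ≥ 4` the term `d 2^(d-1)`
is at most `2^(n-2)`, and comparing the largest powers of two forces `m + 2 = n`. What is left,
`2^(m₁+2) - 2^{n₁} = d 2^(d-1)`, has left side `2^{n₁}` times the odd number `2^s - 1`, hence
`d = 2^b (2^s - 1)` with `n₁ = d - 1 + b`; put `a = b + s`.
-/

theorem genFib_zero (k : ℕ) : genFib k 0 = 0 := by rw [genFib]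

theorem genFib_one (k : ℕ) : genFib k 1 = 1 := by rw [genFib]

theorem genFib_two {k : ℕ} (hk : k ≠ 0) : genFib k 2 = 1 := by
  obtain ⟨k, rfl⟩ := Nat.exists_eq_succ_of_ne_zero hk
  rw [genFib, Finset.sum_range_succ']
  simp [genFib_zero, genFib_one]

-- For `n < k` the truncated index `n - k = 0` plays the role of the vanishing negative indices.
theorem genFib_succ_add_genFib_sub (k : ℕ) {n : ℕ} (hn : 2 ≤ n) :
    genFib k (n + 1) + genFib k (n - k) = 2 * genFib k n := by
  obtain ⟨n, rfl⟩ : ∃ n', n = n' + 2 := ⟨n - 2, by omega⟩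
  rcases k with _ | k
  · simp [genFib]
  have hsucc : genFib (k + 1) (n + 2 + 1)
      = genFib (k + 1) (n + 2) + ∑ i ∈ Finset.range k, genFib (k + 1) (n + 1 - i) := by
    rw [genFib, Finset.sum_range_succ', add_comm]
    congr 1
    exact Finset.sum_congr rfl fun i _ => congrArg _ (by omega)
  have hself : genFib (k + 1) (n + 2)
      = ∑ i ∈ Finset.range k, genFib (k + 1) (n + 1 - i) + genFib (k + 1) (n + 2 - (k + 1)) := by
    rw [genFib, Finset.sum_range_succ]
    congr 2
    omega
  omega

theorem genFib_eq_two_pow {k n : ℕ} (h2 : 2 ≤ n) (hn : n ≤ k + 1) : genFib k n = 2 ^ (n - 2) := by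
  induction n, h2 using Nat.le_induction with
  | base => exact genFib_two (by omega)
  | succ n h2 ih =>
    have hrec := genFib_succ_add_genFib_sub k h2
    rw [Nat.sub_eq_zero_of_le (by omega), genFib_zero, ih (by omega)] at hrec
    rw [show n + 1 - 2 = n - 2 + 1 by omega, pow_succ]
    omega

theorem four_mul_genFib_add_add_two {k j : ℕ} (hk : k ≠ 0) (hj : j ≤ k) :
    4 * genFib k (k + j + 2) + (j + 2) * 2 ^ (j + 1) = 2 ^ (k + j + 2) := by
  induction j with
  | zero =>
    obtain ⟨k, rfl⟩ : ∃ k', k = k' + 1 := ⟨k - 1, by omega⟩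
    have hrec := genFib_succ_add_genFib_sub (k + 1) (n := k + 2) (by omega)
    have htop : genFib (k + 1) (k + 2) = 2 ^ k := genFib_eq_two_pow (by omega) le_rfl
    rw [htop, show k + 2 - (k + 1) = 1 by omega, genFib_one] at hrec
    zify at hrec ⊢
    linear_combination 4 * hrec
  | succ j ih =>
    have hrec := genFib_succ_add_genFib_sub k (n := k + j + 2) (by omega)
    have hlow : genFib k (j + 2) = 2 ^ j := genFib_eq_two_pow (by omega) (by omega)
    rw [show k + j + 2 - k = j + 2 by omega, hlow] at hrec
    zify at ih hrec ⊢
    linear_combination 2 * ih (by omega) + 4 * hrec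

theorem eq_of_two_pow_add_two_pow_eq {a b c e y : ℕ} (h : 2 ^ a + 2 ^ c = 2 ^ b + 2 ^ e + y)
    (hce : c < e) (hba : b + 2 ≤ a) (hy : 4 * y ≤ 2 ^ a) : e = a := by
  have hmono : ∀ {i j}, i ≤ j → 2 ^ i ≤ 2 ^ j := Nat.pow_le_pow_right two_pos
  have hpos : ∀ i, 1 ≤ 2 ^ i := fun _ => Nat.one_le_two_pow
  rcases lt_trichotomy e a with hea | hea | hae
  · have hb : 2 ^ b * 4 ≤ 2 ^ a := by simpa [pow_add] using hmono hba
    have he : 2 ^ e * 2 ≤ 2 ^ a := by rw [← pow_succ]; exact hmono hea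
    have := hpos c
    omega
  · exact hea
  · have ha : 2 ^ a * 2 ≤ 2 ^ e := by rw [← pow_succ]; exact hmono hae
    have hc : 2 ^ c * 2 ≤ 2 ^ e := by rw [← pow_succ]; exact hmono hce
    have := hpos b
    omega

theorem four_mul_add_two_mul_two_pow_le {k j : ℕ} (hk : 4 ≤ k) (hj : j ≤ k) :
    4 * ((j + 2) * 2 ^ (j + 1)) ≤ 2 ^ (k + j + 2) := by
  have hk' : k - 3 < 2 ^ (k - 3) := Nat.lt_two_pow_self
  calc 4 * ((j + 2) * 2 ^ (j + 1)) ≤ 16 * 2 ^ (k - 3) * 2 ^ (j + 1) := by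
        rw [← mul_assoc]; exact Nat.mul_le_mul_right _ (by omega)
    _ = 2 ^ (k + j + 2) := by
        rw [show k + j + 2 = 4 + (k - 3) + (j + 1) by omega, pow_add, pow_add]; ring

theorem exists_eq_two_pow_sub_two_pow {b c d t : ℕ} (h : 2 ^ c = 2 ^ b + d * 2 ^ t)
    (hd : 0 < d) : ∃ a e, e < a ∧ d = 2 ^ a - 2 ^ e ∧ b = t + e ∧ c = t + a := by
  have hpos : 0 < d * 2 ^ t := by positivity
  obtain ⟨s, rfl⟩ : ∃ s, c = b + s :=
    Nat.exists_eq_add_of_le ((Nat.pow_le_pow_iff_right one_lt_two).1 (by omega))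
  have hs : s ≠ 0 := by
    rintro rfl
    rw [add_zero] at h
    omega
  have hodd : 2 ^ b * (2 ^ s - 1) = d * 2 ^ t := by
    rw [Nat.mul_sub_one, ← pow_add]; omega
  have hcop : Nat.Coprime (2 ^ t) (2 ^ s - 1) :=
    Nat.Coprime.pow_left _ <| Nat.coprime_two_left.2 <|
      Nat.Even.sub_odd Nat.one_le_two_pow ((Nat.even_pow' hs).2 even_two) odd_one
  obtain ⟨e, rfl⟩ : ∃ e, b = t + e := by
    have : 2 ^ t ∣ 2 ^ b := hcop.dvd_of_dvd_mul_right ⟨d, by rw [hodd, mul_comm]⟩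
    exact Nat.exists_eq_add_of_le ((Nat.pow_dvd_pow_iff_le_right one_lt_two).1 this)
  refine ⟨e + s, e, by omega, ?_, rfl, by ring⟩
  apply Nat.eq_of_mul_eq_mul_left (Nat.two_pow_pos t)
  rw [pow_add, ← Nat.mul_sub_one, ← mul_assoc, ← pow_add, hodd, mul_comm]

theorem pillai_case2b (k n n1 m m1 : ℕ) (hk : 4 ≤ k) (hn1l : 2 ≤ n1) (hn1u : n1 ≤ k + 1)
    (hnl : k + 2 ≤ n) (hnu : n ≤ 2 * k + 2) (hnn : n1 < n - 1) (hm : m1 < m)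
    (heq : (genFib k n : ℤ) - 2 ^ m = (genFib k n1 : ℤ) - 2 ^ m1) :
    m = n - 2 ∧ ∃ a b : ℕ, b < a ∧ (a, b) ≠ (1, 0) ∧ n - k = 2 ^ a - 2 ^ b ∧
      n1 = 2 ^ a - 2 ^ b + b - 1 ∧ m1 = 2 ^ a - 2 ^ b + a - 3 := by
  obtain ⟨j, rfl⟩ : ∃ j, n = k + j + 2 := ⟨n - k - 2, by omega⟩
  have hFn := four_mul_genFib_add_add_two (by omega : k ≠ 0) (by omega : j ≤ k)
  have hFn1 : 4 * genFib k n1 = 2 ^ n1 := by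
    rw [genFib_eq_two_pow hn1l hn1u, show 4 = 2 ^ 2 from rfl, ← pow_add, Nat.add_sub_cancel' hn1l]
  have hsum : 2 ^ (k + j + 2) + 2 ^ (m1 + 2) = 2 ^ n1 + 2 ^ (m + 2) + (j + 2) * 2 ^ (j + 1) := by
    zify at hFn hFn1 ⊢
    linear_combination 4 * heq - hFn + hFn1
  have hmn : m + 2 = k + j + 2 :=
    eq_of_two_pow_add_two_pow_eq hsum (by omega) (by omega)
      (four_mul_add_two_mul_two_pow_le hk (by omega))
  obtain ⟨a, b, hba, hd, hn1, hm1⟩ :=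
    exists_eq_two_pow_sub_two_pow (c := m1 + 2) (b := n1) (d := j + 2) (t := j + 1)
      (by rw [hmn] at hsum; omega) (by omega)
  refine ⟨by omega, a, b, hba, ?_, by omega, by omega, by omega⟩
  rintro ⟨⟩
  omega
end
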